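/- Let M_r ∈ ℝ^{3×3} be a constant symmetric matrix and let R̃ : ℝ → SO(3) be differentiable with R̃' = R̃ [w_Ω − R̂ b̃_Ω]_× for functions w_Ω, b̃_Ω : ℝ → ℝ³ and R̂ : ℝ → SO(3). Then (d/dt) ‖M_r R̃‖_I = −½ vex(P_a(M_r R̃))ᵀ (R̂ b̃_Ω − w_Ω). -/

import Mathlib

/-!
`‖M R‖_I` is affine in `R`, so along `R̃' = R̃ [u]ₓ` its derivative is `-¼ Tr(M R̃ [u]ₓ)`.
Since `[u]ₓ` is skew-symmetric, only the antisymmetric part of `A = M R̃` survives in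
`Tr(A [u]ₓ)`, and a direct computation gives `Tr(A [u]ₓ) = -2 vex(𝒫ₐ(A)) ⬝ u`.
-/

open Matrix

attribute [local instance] Matrix.frobeniusNormedAddCommGroup Matrix.frobeniusNormedSpace

/-- The hat map `[y]ₓ`: the 3×3 skew-symmetric matrix with `[y]ₓ x = y × x`. -/
def hat (y : Fin 3 → ℝ) : Matrix (Fin 3) (Fin 3) ℝ :=
  !![0, -y 2, y 1; y 2, 0, -y 0; -y 1, y 0, 0]

/-- `vex(𝒫ₐ(A)) = ½ [A₃₂ − A₂₃, A₁₃ − A₃₁, A₂₁ − A₁₂]ᵀ`. -/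
noncomputable def vexPa (A : Matrix (Fin 3) (Fin 3) ℝ) : Fin 3 → ℝ :=
  ![(A 2 1 - A 1 2) / 2, (A 0 2 - A 2 0) / 2, (A 1 0 - A 0 1) / 2]

/-- `‖M R‖_I = ¼ Tr(M (I₃ − R))`. -/
noncomputable def normI (M R : Matrix (Fin 3) (Fin 3) ℝ) : ℝ :=
  (M * (1 - R)).trace / 4

theorem trace_mul_hat (A : Matrix (Fin 3) (Fin 3) ℝ) (u : Fin 3 → ℝ) :
    (A * hat u).trace = -2 * (vexPa A ⬝ᵥ u) := by
  simp only [trace, diag, mul_apply, Fin.sum_univ_three, hat, vexPa, dotProduct, of_apply,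
    cons_val', cons_val_zero, cons_val_one, cons_val, cons_val_fin_one]
  ring

theorem normI_eq_sub (M R : Matrix (Fin 3) (Fin 3) ℝ) :
    normI M R = (M.trace - (M * R).trace) / 4 := by
  rw [normI, Matrix.mul_sub, Matrix.mul_one, trace_sub]

theorem HasDerivAt.trace_mul_left {n : Type*} [Fintype n] (M : Matrix n n ℝ)
    {R : ℝ → Matrix n n ℝ} {R' : Matrix n n ℝ} {t : ℝ} (hR : HasDerivAt R R' t) :
    HasDerivAt (fun s => (M * R s).trace) (M * R').trace t :=
  ((traceLinearMap n ℝ ℝ).comp (LinearMap.mulLeft ℝ M)).toContinuousLinearMap.hasFDerivAt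
    |>.comp_hasDerivAt t hR

theorem HasDerivAt.normI (M : Matrix (Fin 3) (Fin 3) ℝ) {R : ℝ → Matrix (Fin 3) (Fin 3) ℝ}
    {R' : Matrix (Fin 3) (Fin 3) ℝ} {t : ℝ} (hR : HasDerivAt R R' t) :
    HasDerivAt (fun s => normI M (R s)) (-(M * R').trace / 4) t := by
  simp only [normI_eq_sub]
  simpa using ((hasDerivAt_const t M.trace).sub (hR.trace_mul_left M)).div_const 4

theorem normI_deriv_general (Mr : Matrix (Fin 3) (Fin 3) ℝ)
    (Rtilde Rhat : ℝ → Matrix (Fin 3) (Fin 3) ℝ)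
    (wΩ btildeΩ : ℝ → Fin 3 → ℝ)
    (hRtilde : ∀ t, HasDerivAt Rtilde
      (Rtilde t * hat (wΩ t - (Rhat t).mulVec (btildeΩ t))) t) :
    ∀ t, HasDerivAt (fun s => normI Mr (Rtilde s))
      (-(2 : ℝ)⁻¹ *
        (vexPa (Mr * Rtilde t) ⬝ᵥ ((Rhat t).mulVec (btildeΩ t) - wΩ t))) t := by
  intro t
  convert (hRtilde t).normI Mr using 1
  rw [← mul_assoc, trace_mul_hat, ← neg_sub, dotProduct_neg]
  ring

/-- for constant symmetric `M_r` and `R̃' = R̃ [w_Ω − R̂ b̃_Ω]ₓ`,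
`(d/dt) ‖M_r R̃‖_I = −½ vex(𝒫ₐ(M_r R̃))ᵀ (R̂ b̃_Ω − w_Ω)`. -/
theorem normI_deriv (Mr : Matrix (Fin 3) (Fin 3) ℝ) (hMr : Mrᵀ = Mr)
    (Rtilde Rhat : ℝ → Matrix (Fin 3) (Fin 3) ℝ)
    (hRtildeSO : ∀ t, (Rtilde t)ᵀ * Rtilde t = 1 ∧ (Rtilde t).det = 1)
    (hRhatSO : ∀ t, (Rhat t)ᵀ * Rhat t = 1 ∧ (Rhat t).det = 1)
    (wΩ btildeΩ : ℝ → Fin 3 → ℝ)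
    (hRtilde : ∀ t, HasDerivAt Rtilde
      (Rtilde t * hat (wΩ t - (Rhat t).mulVec (btildeΩ t))) t) :
    ∀ t, HasDerivAt (fun s => normI Mr (Rtilde s))
      (-(2 : ℝ)⁻¹ *
        (vexPa (Mr * Rtilde t) ⬝ᵥ ((Rhat t).mulVec (btildeΩ t) - wΩ t))) t :=
  normI_deriv_general Mr Rtilde Rhat wΩ btildeΩ hRtilde
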